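/- arXiv:2312.13014 — 3 statements merged into one kernel-verified Lean document; each statement's English description precedes it below -/
import Mathlib

section
/- Let G be a linearly ordered abelian group and let A be a G-graded k-algebra which is a domain and a finitely generated module over its center Z. Then for every φ ∈ Oz(A) there is a nonzero homogeneous normal element a ∈ A with a·φ(x) = x·a for all x ∈ A. In particular, if A is a ℤ^n-graded domain that is a finite module over its center, then every automorphism in Oz(A) is a graded automorphism (it maps each homogeneous component of A into itself). -/
noncomputable section

/-- The **ozone group** of a `k`-algebra `A`: the group of `k`-algebra automorphisms
of `A` that fix the center of `A` pointwise. -/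
def ozoneGroup (k A : Type*) [CommSemiring k] [Semiring A] [Algebra k A] :
    Subgroup (A ≃ₐ[k] A) where
  carrier := {σ | ∀ z ∈ Subalgebra.center k A, σ z = z}
  one_mem' := fun _ _ => rfl
  mul_mem' := by
    intro σ τ hσ hτ z hz
    show σ (τ z) = z
    rw [hτ z hz, hσ z hz]
  inv_mem' := by
    intro σ hσ z hz
    show σ.symm z = z
    conv_lhs => rw [← hσ z hz]
    exact σ.symm_apply_apply z

/-- An element `a` of a ring is **normal** if `a·A = A·a`. -/
def IsNormal {A : Type*} [Mul A] (a : A) : Prop :=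
  Set.range (fun x => a * x) = Set.range (fun x => x * a)

/-!
Over the fraction field `K` of the center `Z`, `D = K ⊗[Z] A` is a finite-dimensional central
division algebra and `φ` extends to a `K`-automorphism of `D`. By Skolem–Noether (here: `D ⊗ Dᵐᵒᵖ`
is simple Artinian, so `D` and its twist by the automorphism are isomorphic bimodules) the extension
is inner, and clearing denominators gives `a ≠ 0` in `A` with `a * φ x = x * a`.

For the grading, compare top and bottom degrees of both sides of `a * φ x = x * a` with `x`
homogeneous: in a domain graded by a linearly ordered group these degrees are additive, so `φ x`
has top and bottom degree equal to that of `x`, i.e. `φ` is graded. Then every homogeneous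
component of `a` satisfies the same identity.
-/

open TensorProduct

section TensorSimple

variable {F B C : Type*} [Field F] [Ring C] [Algebra F C]

section Coordinates

variable [Ring B] [Algebra F B] {κ : Type*} [DecidableEq κ] (β : Module.Basis κ F C)

theorem TensorProduct.equivFinsuppOfBasisRight_tmul_one_mul_apply (b : B) (x : B ⊗[F] C)
    (i : κ) :
    equivFinsuppOfBasisRight β ((b ⊗ₜ[F] (1 : C)) * x) i =
      b * equivFinsuppOfBasisRight β x i := by
  induction x using TensorProduct.induction_on with
  | zero => simp
  | tmul => simp
  | add x y hx hy => simp [mul_add, hx, hy]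

theorem TensorProduct.equivFinsuppOfBasisRight_mul_tmul_one_apply (b : B) (x : B ⊗[F] C)
    (i : κ) :
    equivFinsuppOfBasisRight β (x * (b ⊗ₜ[F] (1 : C))) i =
      equivFinsuppOfBasisRight β x i * b := by
  induction x using TensorProduct.induction_on with
  | zero => simp
  | tmul => simp
  | add x y hx hy => simp [add_mul, hx, hy]

end Coordinates

theorem TensorProduct.exists_eq_one_tmul_of_forall_commute [Ring B] [Algebra F B]
    [Algebra.IsCentral F B] (y : B ⊗[F] C) (hy : ∀ b : B, (b ⊗ₜ[F] (1 : C)) * y = y * (b ⊗ₜ 1)) :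
    ∃ c : C, y = 1 ⊗ₜ c := by
  classical
  let β := Module.Basis.ofVectorSpace F C
  let e := equivFinsuppOfBasisRight (M := B) β
  have hcentral : ∀ i, e y i ∈ Subalgebra.center F B := fun i =>
    Subalgebra.mem_center_iff.mpr fun b => by
      simpa [e, equivFinsuppOfBasisRight_tmul_one_mul_apply,
        equivFinsuppOfBasisRight_mul_tmul_one_apply] using congr($(hy b) |> e <| i)
  choose f hf using fun i => (Algebra.IsCentral.mem_center_iff F).mp (hcentral i)
  refine ⟨(e y).sum fun i _ => f i • β i, ?_⟩
  calc y = e.symm (e y) := (e.symm_apply_apply y).symm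
    _ = (e y).sum fun i m => m ⊗ₜ β i := equivFinsuppOfBasisRight_symm_apply β (e y)
    _ = _ := by
      simp only [Finsupp.sum, hf, tmul_sum, Algebra.algebraMap_eq_smul_one, smul_tmul]

theorem TwoSidedIdeal.exists_one_tmul_mem [DivisionRing B] [Algebra F B] [Algebra.IsCentral F B]
    (I : TwoSidedIdeal (B ⊗[F] C)) (hI : I ≠ ⊥) : ∃ c : C, c ≠ 0 ∧ (1 : B) ⊗ₜ[F] c ∈ I := by
  classical
  let e := equivFinsuppOfBasisRight (M := B) (Module.Basis.ofVectorSpace F C)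
  -- Take `x ∈ I \ {0}` with the fewest nonzero coordinates and normalize one of them to `1`;
  -- commutators with `B ⊗ 1` kill that coordinate, so by minimality they vanish, and the
  -- normalized element has central coordinates, i.e. it lies in `1 ⊗ C`.
  have hex : ∃ n, ∃ x ∈ I, x ≠ 0 ∧ (e x).support.card = n := by
    obtain ⟨x, hxI, hx0⟩ := SetLike.exists_of_lt (bot_lt_iff_ne_bot.mpr hI)
    exact ⟨_, x, hxI, by simpa using hx0, rfl⟩
  obtain ⟨x, hxI, hx0, hxn⟩ := Nat.find_spec hex
  have hmin : ∀ z ∈ I, (e z).support.card < Nat.find hex → z = 0 := fun z hzI hz =>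
    by_contra fun hz0 => Nat.find_min hex hz ⟨z, hzI, hz0, rfl⟩
  have hl : ∀ (b : B) z i, e ((b ⊗ₜ[F] (1 : C)) * z) i = b * e z i :=
    equivFinsuppOfBasisRight_tmul_one_mul_apply _
  have hr : ∀ (b : B) z i, e (z * (b ⊗ₜ[F] (1 : C))) i = e z i * b :=
    equivFinsuppOfBasisRight_mul_tmul_one_apply _
  obtain ⟨i₀, hi₀⟩ := Finsupp.support_nonempty_iff.mpr (e.map_ne_zero_iff.mpr hx0)
  set y := ((e x i₀)⁻¹ ⊗ₜ[F] (1 : C)) * x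
  have hyI : y ∈ I := I.mul_mem_left _ _ hxI
  have hy : ∀ i, e y i = (e x i₀)⁻¹ * e x i := hl _ x
  have hyi₀ : e y i₀ = 1 := by rw [hy, inv_mul_cancel₀ (Finsupp.mem_support_iff.mp hi₀)]
  have hcomm : ∀ b : B, (b ⊗ₜ[F] (1 : C)) * y = y * (b ⊗ₜ 1) := by
    intro b
    rw [← sub_eq_zero]
    refine hmin _ (I.sub_mem (I.mul_mem_left _ _ hyI) (I.mul_mem_right _ _ hyI)) ?_
    have hsub : (e ((b ⊗ₜ[F] (1 : C)) * y - y * (b ⊗ₜ 1))).support ⊆ (e x).support.erase i₀ := by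
      intro i hi
      simp only [Finsupp.mem_support_iff, map_sub, Finsupp.sub_apply, hl, hr] at hi
      refine Finset.mem_erase.mpr ⟨fun h => hi (by simp [h, hyi₀]), ?_⟩
      exact Finsupp.mem_support_iff.mpr fun h => hi (by simp [hy, h])
    calc _ ≤ ((e x).support.erase i₀).card := Finset.card_le_card hsub
      _ < (e x).support.card := Finset.card_erase_lt_of_mem hi₀
      _ = Nat.find hex := hxn
  obtain ⟨c, hc⟩ := TensorProduct.exists_eq_one_tmul_of_forall_commute y hcomm
  refine ⟨c, ?_, hc ▸ hyI⟩
  rintro rfl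
  simp [hc] at hyi₀

instance IsSimpleRing.tensorProduct [DivisionRing B] [Algebra F B] [Algebra.IsCentral F B]
    [IsSimpleRing C] : IsSimpleRing (B ⊗[F] C) := by
  refine IsSimpleRing.of_eq_bot_or_eq_top fun I => or_iff_not_imp_left.mpr fun hI => ?_
  obtain ⟨c, hc0, hcI⟩ := TwoSidedIdeal.exists_one_tmul_mem I hI
  have h1 : (1 : C) ∈ I.comap (Algebra.TensorProduct.includeRight : C →ₐ[F] B ⊗[F] C) :=
    IsSimpleRing.one_mem_of_ne_zero_mem _ hc0 (TwoSidedIdeal.mem_comap _ |>.mpr hcI)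
  exact I.one_mem_iff.mp <| by
    simpa [TwoSidedIdeal.mem_comap, Algebra.TensorProduct.one_def] using h1

end TensorSimple

section SimpleArtinian

variable {R M : Type*} [Ring R] [IsSimpleRing R] [IsArtinianRing R]
  [AddCommGroup M] [Module R M] [IsSimpleModule R M]

theorem IsSimpleRing.nonempty_linearEquiv_of_isSimpleModule {N : Type*} [AddCommGroup N]
    [Module R N] [IsSimpleModule R N] : Nonempty (M ≃ₗ[R] N) := by
  obtain ⟨I, ⟨eI⟩⟩ := IsSemisimpleRing.exists_linearEquiv_ideal_of_isSimpleModule R M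
  obtain ⟨J, ⟨eJ⟩⟩ := IsSemisimpleRing.exists_linearEquiv_ideal_of_isSimpleModule R N
  have := IsSimpleModule.congr eI.symm
  have := IsSimpleModule.congr eJ.symm
  obtain ⟨e⟩ := IsSimpleRing.isIsotypic R R J I
  exact ⟨eI.trans (e.trans eJ.symm)⟩

theorem IsSimpleRing.exists_bijective_semilinearMap (σ : R ≃+* R) :
    ∃ f : M →ₛₗ[(σ : R →+* R)] M, Function.Bijective f := by
  let N := (ModuleCat.restrictScalars (σ : R →+* R)).obj (ModuleCat.of R M)
  let l : N →ₛₗ[(σ : R →+* R)] M :=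
    { toFun := id, map_add' := fun _ _ => rfl, map_smul' := fun _ _ => rfl }
  have : IsSimpleModule R N := (l.isSimpleModule_iff_of_bijective Function.bijective_id).mpr ‹_›
  obtain ⟨e⟩ := nonempty_linearEquiv_of_isSimpleModule (R := R) (M := M) (N := N)
  exact ⟨{ toFun := e, map_add' := e.map_add, map_smul' := e.map_smul }, e.bijective⟩

end SimpleArtinian

theorem AlgEquiv.exists_ne_zero_mul_apply_eq_of_divisionRing {F B : Type*} [Field F]
    [DivisionRing B] [Algebra F B] [Algebra.IsCentral F B] [FiniteDimensional F B]
    (ψ : B ≃ₐ[F] B) : ∃ u : B, u ≠ 0 ∧ ∀ x, u * ψ x = x * u := by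
  -- `B` and its twist by `ψ⁻¹ ⊗ id` are simple modules over the simple Artinian ring
  -- `B ⊗ Bᵐᵒᵖ`, hence isomorphic; the isomorphism is right multiplication by `f 1`.
  let _ : Module (B ⊗[F] Bᵐᵒᵖ) B := TensorProduct.Algebra.module
  have hsmul : ∀ (b : B) (c : Bᵐᵒᵖ) (m : B), (b ⊗ₜ[F] c) • m = b * (m * c.unop) :=
    fun _ _ _ => rfl
  have : IsSimpleModule (B ⊗[F] Bᵐᵒᵖ) B := by
    refine isSimpleModule_iff_toSpanSingleton_surjective.mpr ⟨inferInstance, fun x hx y => ?_⟩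
    exact ⟨(y * x⁻¹) ⊗ₜ 1, by simp [hsmul, mul_assoc, inv_mul_cancel₀ hx]⟩
  have : IsArtinianRing (B ⊗[F] Bᵐᵒᵖ) := IsArtinianRing.of_finite F _
  obtain ⟨f, hf⟩ := IsSimpleRing.exists_bijective_semilinearMap (M := B)
    (Algebra.TensorProduct.congr ψ.symm (AlgEquiv.refl (R := F) (A₁ := Bᵐᵒᵖ))).toRingEquiv
  have hf_bimod : ∀ (b : B) (c : Bᵐᵒᵖ) (m : B),
      f (b * (m * c.unop)) = ψ.symm b * (f m * c.unop) := fun b c m => by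
    simpa [hsmul] using f.map_smulₛₗ (b ⊗ₜ c) m
  have hf_left : ∀ m, f m = f 1 * m := fun m => by simpa using hf_bimod 1 (.op m) 1
  have hf_right : ∀ b, f b = ψ.symm b * f 1 := fun b => by simpa using hf_bimod b 1 1
  refine ⟨f 1, fun h => one_ne_zero (hf.1 (h.trans (map_zero f).symm)), fun x => ?_⟩
  rw [← hf_left, hf_right, ψ.symm_apply_apply]

section FractionRing

variable {R M : Type*} [CommRing R] [IsDomain R] [AddCommGroup M] [Module R M]

instance FractionRing.isLocalizedModule_mk_one :
    IsLocalizedModule (nonZeroDivisors R) (TensorProduct.mk R (FractionRing R) M 1) :=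
  (isLocalizedModule_iff_isBaseChange _ _ _).mpr (TensorProduct.isBaseChange R M _)

theorem FractionRing.exists_smul_eq_one_tmul (y : FractionRing R ⊗[R] M) :
    ∃ s : R, s ≠ 0 ∧ ∃ m : M, s • y = 1 ⊗ₜ m := by
  obtain ⟨⟨m, s⟩, h⟩ := IsLocalizedModule.surj (nonZeroDivisors R)
    (TensorProduct.mk R (FractionRing R) M 1) y
  exact ⟨s, nonZeroDivisors.coe_ne_zero s, m, h⟩

theorem FractionRing.one_tmul_injective [Module.IsTorsionFree R M] :
    Function.Injective fun m : M => (1 : FractionRing R) ⊗ₜ[R] m :=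
  (IsLocalizedModule.injective_iff_isRegular (nonZeroDivisors R)
    (TensorProduct.mk R (FractionRing R) M 1)).mpr
    fun s => IsSMulRegular.of_ne_zero (M := M) (nonZeroDivisors.coe_ne_zero s)

instance FractionRing.isTorsionFree_tensorProduct :
    Module.IsTorsionFree R (FractionRing R ⊗[R] M) :=
  .trans_faithfulSMul R (FractionRing R) _

variable {A : Type*} [Ring A] [Algebra R A] [Module.IsTorsionFree R A]

theorem FractionRing.isDomain_tensorProduct [IsDomain A] : IsDomain (FractionRing R ⊗[R] A) := by
  have hinj := one_tmul_injective (R := R) (M := A)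
  have : Nontrivial (FractionRing R ⊗[R] A) := ⟨_, _, hinj.ne (one_ne_zero (α := A))⟩
  suffices NoZeroDivisors (FractionRing R ⊗[R] A) from NoZeroDivisors.to_isDomain _
  refine ⟨fun {x y} hxy => ?_⟩
  obtain ⟨s, hs, a, ha⟩ := exists_smul_eq_one_tmul x
  obtain ⟨t, ht, b, hb⟩ := exists_smul_eq_one_tmul y
  have hab : (1 : FractionRing R) ⊗ₜ[R] (a * b) = 1 ⊗ₜ 0 := by
    rw [tmul_zero, ← one_mul (1 : FractionRing R), ← Algebra.TensorProduct.tmul_mul_tmul, ← ha,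
      ← hb, smul_mul_smul_comm, hxy, smul_zero]
  rcases mul_eq_zero.mp (hinj hab) with rfl | rfl
  · exact .inl ((smul_eq_zero_iff_right hs).mp (ha.trans (tmul_zero _ _)))
  · exact .inr ((smul_eq_zero_iff_right ht).mp (hb.trans (tmul_zero _ _)))

theorem FractionRing.isCentral_tensorProduct [Algebra.IsCentral R A] :
    Algebra.IsCentral (FractionRing R) (FractionRing R ⊗[R] A) := by
  refine ⟨fun v hv => ?_⟩
  obtain ⟨s, hs, a, ha⟩ := exists_smul_eq_one_tmul v
  have ha_central : a ∈ Subalgebra.center R A := Subalgebra.mem_center_iff.mpr fun w => by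
    apply one_tmul_injective (R := R)
    show (1 : FractionRing R) ⊗ₜ[R] (w * a) = 1 ⊗ₜ (a * w)
    rw [← one_mul (1 : FractionRing R), ← Algebra.TensorProduct.tmul_mul_tmul,
      ← Algebra.TensorProduct.tmul_mul_tmul, ← ha, mul_smul_comm, smul_mul_assoc,
      Subalgebra.mem_center_iff.mp hv]
  obtain ⟨r, rfl⟩ := (Algebra.IsCentral.mem_center_iff R).mp ha_central
  have hs' : algebraMap R (FractionRing R) s ≠ 0 :=
    IsFractionRing.to_map_ne_zero_of_mem_nonZeroDivisors (mem_nonZeroDivisors_of_ne_zero hs)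
  refine Algebra.mem_bot.mpr
    ⟨(algebraMap R (FractionRing R) s)⁻¹ * algebraMap R (FractionRing R) r, ?_⟩
  rw [map_mul, ← IsScalarTower.algebraMap_apply, Algebra.TensorProduct.algebraMap_apply', ← ha,
    ← Algebra.smul_def, ← algebraMap_smul (FractionRing R) s v, inv_smul_smul₀ hs']

end FractionRing

theorem AlgEquiv.exists_ne_zero_mul_apply_eq_of_isDomain {R A : Type*} [CommRing R] [Ring A]
    [IsDomain A] [Algebra R A] [FaithfulSMul R A] [Algebra.IsCentral R A] [Module.Finite R A]
    (φ : A ≃ₐ[R] A) : ∃ a : A, a ≠ 0 ∧ ∀ x, a * φ x = x * a := by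
  have : IsDomain R := .of_faithfulSMul R A
  have := FractionRing.isDomain_tensorProduct (R := R) (A := A)
  have := FractionRing.isCentral_tensorProduct (R := R) (A := A)
  let _ : DivisionRing (FractionRing R ⊗[R] A) :=
    divisionRingOfFiniteDimensional (FractionRing R) _
  obtain ⟨u, hu0, hu⟩ := exists_ne_zero_mul_apply_eq_of_divisionRing
    (Algebra.TensorProduct.congr (AlgEquiv.refl (R := FractionRing R) (A₁ := FractionRing R)) φ)
  obtain ⟨s, hs, a, ha⟩ := FractionRing.exists_smul_eq_one_tmul u
  refine ⟨a, ?_, fun x => FractionRing.one_tmul_injective (R := R) ?_⟩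
  · rintro rfl
    exact hu0 ((smul_eq_zero_iff_right hs).mp (ha.trans (tmul_zero _ _)))
  · have hux : u * (1 ⊗ₜ φ x) = (1 ⊗ₜ x) * u := by simpa using hu (1 ⊗ₜ x)
    calc (1 : FractionRing R) ⊗ₜ[R] (a * φ x) = (s • u) * (1 ⊗ₜ φ x) := by
          rw [ha, Algebra.TensorProduct.tmul_mul_tmul, one_mul]
      _ = (1 ⊗ₜ x) * (s • u) := by
          rw [smul_mul_assoc, mul_smul_comm, hux]
      _ = 1 ⊗ₜ (x * a) := by rw [ha, Algebra.TensorProduct.tmul_mul_tmul, one_mul]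

section GradedRing

open scoped Pointwise

variable {ι A σ : Type*} [DecidableEq ι] [Ring A] [SetLike σ A] [AddSubgroupClass σ A]

section AddMonoid

variable [AddMonoid ι] (𝒜 : ι → σ) [GradedRing 𝒜] [∀ i (x : 𝒜 i), Decidable (x ≠ 0)]

theorem DirectSum.support_decompose_eq_empty_iff {x : A} :
    (decompose 𝒜 x).support = ∅ ↔ x = 0 := by
  rw [DFinsupp.support_eq_empty, ← decompose_zero 𝒜, (decompose 𝒜).apply_eq_iff_eq]

theorem DirectSum.support_decompose_of_mem {x : A} {i : ι} (hx : x ∈ 𝒜 i) (hx0 : x ≠ 0) :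
    (decompose 𝒜 x).support = {i} := by
  rw [decompose_of_mem 𝒜 hx, support_of]
  exact fun h => hx0 congr($h.1)

theorem DirectSum.mem_of_support_decompose_subset {x : A} {i : ι}
    (h : (decompose 𝒜 x).support ⊆ {i}) : x ∈ 𝒜 i := by
  rw [← sum_support_decompose 𝒜 x]
  exact sum_mem fun j hj => Finset.mem_singleton.mp (h hj) ▸ (decompose 𝒜 x j).2

theorem DirectSum.support_decompose_mul_subset (u v : A) :
    (decompose 𝒜 (u * v)).support ⊆ (decompose 𝒜 u).support + (decompose 𝒜 v).support := by
  intro k hk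
  rw [DFinsupp.mem_support_iff, ne_eq, ← ZeroMemClass.coe_eq_zero, decompose_mul,
    coe_mul_apply] at hk
  obtain ⟨⟨i, j⟩, hij, -⟩ := Finset.exists_ne_zero_of_sum_ne_zero hk
  simp only [Finset.mem_filter, Finset.mem_product] at hij
  exact Finset.mem_add.mpr ⟨i, hij.1.1, j, hij.1.2, hij.2⟩

theorem DirectSum.coe_decompose_mul_add_of_forall_eq {u v : A} {m n : ι}
    (h : ∀ i ∈ (decompose 𝒜 u).support, ∀ j ∈ (decompose 𝒜 v).support,
      i + j = m + n → i = m ∧ j = n) :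
    (decompose 𝒜 (u * v) (m + n) : A) = decompose 𝒜 u m * decompose 𝒜 v n := by
  rw [decompose_mul, coe_mul_apply]
  refine Finset.sum_eq_single (m, n) (fun ij hij hne => ?_) fun hmn => ?_
  · simp only [Finset.mem_filter, Finset.mem_product] at hij
    exact absurd (Prod.ext_iff.mpr (h _ hij.1.1 _ hij.1.2 hij.2)) hne
  · simp only [Finset.mem_filter, Finset.mem_product, DFinsupp.mem_support_iff, and_true,
      not_and_or, not_not] at hmn
    rcases hmn with h0 | h0 <;> simp [h0]

theorem DirectSum.add_mem_support_decompose_mul [NoZeroDivisors A] {u v : A} {m n : ι}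
    (hm : m ∈ (decompose 𝒜 u).support) (hn : n ∈ (decompose 𝒜 v).support)
    (h : ∀ i ∈ (decompose 𝒜 u).support, ∀ j ∈ (decompose 𝒜 v).support,
      i + j = m + n → i = m ∧ j = n) :
    m + n ∈ (decompose 𝒜 (u * v)).support := by
  rw [DFinsupp.mem_support_iff] at hm hn ⊢
  rw [ne_eq, ← ZeroMemClass.coe_eq_zero, coe_decompose_mul_add_of_forall_eq 𝒜 h]
  exact mul_ne_zero (mt ZeroMemClass.coe_eq_zero.mp hm) (mt ZeroMemClass.coe_eq_zero.mp hn)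

end AddMonoid

section AddCancelCommMonoid

variable [AddCancelCommMonoid ι] (𝒜 : ι → σ) [GradedRing 𝒜]

theorem DirectSum.coe_decompose_mul_apply_eq_mul {φ : A →+* A}
    (hφ : ∀ i, ∀ x ∈ 𝒜 i, φ x ∈ 𝒜 i) {a : A} (ha : ∀ x, a * φ x = x * a) (n : ι) (x : A) :
    (decompose 𝒜 a n : A) * φ x = x * decompose 𝒜 a n := by
  induction x using DirectSum.Decomposition.inductionOn 𝒜 with
  | zero => simp
  | @homogeneous i y =>
    calc (decompose 𝒜 a n : A) * φ y = decompose 𝒜 (a * φ y) (n + i) :=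
          (coe_decompose_mul_add_of_right_mem 𝒜 (hφ i y y.2)).symm
      _ = decompose 𝒜 (y * a) (i + n) := by rw [ha, add_comm]
      _ = y * decompose 𝒜 a n := coe_decompose_mul_add_of_left_mem 𝒜 y.2
  | add x y hx hy => rw [map_add, mul_add, add_mul, hx, hy]

end AddCancelCommMonoid

section LinearOrder

variable [AddCommMonoid ι] [LinearOrder ι] [IsOrderedCancelAddMonoid ι] (𝒜 : ι → σ) [GradedRing 𝒜]
  [∀ i (x : 𝒜 i), Decidable (x ≠ 0)] [NoZeroDivisors A]

theorem DirectSum.max_support_decompose_mul (u v : A) :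
    (decompose 𝒜 (u * v)).support.max =
      (decompose 𝒜 u).support.max + (decompose 𝒜 v).support.max := by
  refine le_antisymm (Finset.max_le fun k hk => ?_) ?_
  · obtain ⟨i, hi, j, hj, rfl⟩ := Finset.mem_add.mp (support_decompose_mul_subset 𝒜 u v hk)
    exact WithBot.coe_add i j ▸ add_le_add (Finset.le_max hi) (Finset.le_max hj)
  obtain hu | hu := (decompose 𝒜 u).support.eq_empty_or_nonempty
  · simp [hu]
  obtain hv | hv := (decompose 𝒜 v).support.eq_empty_or_nonempty
  · simp [hv]
  rw [← Finset.coe_max' hu, ← Finset.coe_max' hv, ← WithBot.coe_add]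
  exact Finset.le_max <| add_mem_support_decompose_mul 𝒜 (Finset.max'_mem _ hu)
    (Finset.max'_mem _ hv) fun i hi j hj =>
      (add_eq_add_iff_eq_and_eq (Finset.le_max' _ i hi) (Finset.le_max' _ j hj)).mp

theorem DirectSum.min_support_decompose_mul (u v : A) :
    (decompose 𝒜 (u * v)).support.min =
      (decompose 𝒜 u).support.min + (decompose 𝒜 v).support.min := by
  refine le_antisymm ?_ (Finset.le_min fun k hk => ?_)
  · obtain hu | hu := (decompose 𝒜 u).support.eq_empty_or_nonempty
    · simp [hu]
    obtain hv | hv := (decompose 𝒜 v).support.eq_empty_or_nonempty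
    · simp [hv]
    rw [← Finset.coe_min' hu, ← Finset.coe_min' hv, ← WithTop.coe_add]
    exact Finset.min_le <| add_mem_support_decompose_mul 𝒜 (Finset.min'_mem _ hu)
      (Finset.min'_mem _ hv) fun i hi j hj h =>
        ((add_eq_add_iff_eq_and_eq (Finset.min'_le _ i hi) (Finset.min'_le _ j hj)).mp h.symm).imp
          Eq.symm Eq.symm
  · obtain ⟨i, hi, j, hj, rfl⟩ := Finset.mem_add.mp (support_decompose_mul_subset 𝒜 u v hk)
    exact WithTop.coe_add i j ▸ add_le_add (Finset.min_le hi) (Finset.min_le hj)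

theorem DirectSum.mem_of_mul_eq_mul {a w x : A} {g : ι} (ha : a ≠ 0) (hx : x ∈ 𝒜 g) (hx0 : x ≠ 0)
    (h : a * w = x * a) : w ∈ 𝒜 g := by
  have hsa : (decompose 𝒜 a).support ≠ ∅ := mt (support_decompose_eq_empty_iff 𝒜).mp ha
  have hsx := support_decompose_of_mem 𝒜 hx hx0
  have hmax : (decompose 𝒜 w).support.max = g := by
    have := max_support_decompose_mul 𝒜 a w
    rw [h, max_support_decompose_mul, hsx, Finset.max_singleton] at this
    exact WithBot.add_left_cancel (mt Finset.max_eq_bot.mp hsa) (this.symm.trans (add_comm _ _))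
  have hmin : (decompose 𝒜 w).support.min = g := by
    have := min_support_decompose_mul 𝒜 a w
    rw [h, min_support_decompose_mul, hsx, Finset.min_singleton] at this
    exact WithTop.add_left_cancel (mt Finset.min_eq_top.mp hsa) (this.symm.trans (add_comm _ _))
  refine mem_of_support_decompose_subset 𝒜 fun j hj => Finset.mem_singleton.mpr (le_antisymm ?_ ?_)
  · exact WithBot.coe_le_coe.mp (hmax ▸ Finset.le_max hj)
  · exact WithTop.coe_le_coe.mp (hmin ▸ Finset.min_le hj)

end LinearOrder

end GradedRing

theorem isNormal_of_mul_apply_eq {M : Type*} [Mul M] {φ : M → M} (hφ : Function.Surjective φ)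
    {a : M} (h : ∀ x, a * φ x = x * a) : IsNormal a := by
  refine subset_antisymm ?_ ?_
  · rintro _ ⟨y, rfl⟩
    obtain ⟨x, rfl⟩ := hφ y
    exact ⟨x, (h x).symm⟩
  · rintro _ ⟨x, rfl⟩
    exact ⟨φ x, h x⟩

theorem stmt1_general (k A : Type*) [Field k] [Ring A] [Algebra k A] [IsDomain A]
    (G : Type*) [AddCommGroup G] [LinearOrder G] [IsOrderedAddMonoid G] [DecidableEq G]
    (𝒜 : G → Submodule k A) [GradedAlgebra 𝒜]
    [Module.Finite (Subalgebra.center k A) A]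
    (φ : A ≃ₐ[k] A) (hφ : φ ∈ ozoneGroup k A) :
    (∃ (a : A) (g : G), a ≠ 0 ∧ a ∈ 𝒜 g ∧ IsNormal a ∧ ∀ x : A, a * φ x = x * a) ∧
    (∀ (g : G) (x : A), x ∈ 𝒜 g → φ x ∈ 𝒜 g) := by
  classical
  -- Mathlib has no such instance; this one extends the `Module` structure that `Module.Finite`
  -- refers to.
  let _ : Algebra (Subalgebra.center k A) A :=
    .ofModule (fun _ _ _ => mul_assoc _ _ _) fun z x y => by
      show x * (z * y) = z * (x * y)
      rw [← mul_assoc, ← mul_assoc, Subalgebra.mem_center_iff.mp z.2 x]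
  have : FaithfulSMul (Subalgebra.center k A) A := ⟨fun h => Subtype.ext (by simpa using h 1)⟩
  have : Algebra.IsCentral (Subalgebra.center k A) A :=
    ⟨fun x hx => Algebra.mem_bot.mpr ⟨⟨x, Subalgebra.mem_center_iff.mpr
      (Subalgebra.mem_center_iff.mp hx)⟩, mul_one x⟩⟩
  obtain ⟨a, ha0, ha⟩ := AlgEquiv.exists_ne_zero_mul_apply_eq_of_isDomain
    (AlgEquiv.ofRingEquiv (R := Subalgebra.center k A) (f := (φ : A ≃+* A)) fun z =>
      show φ (z * 1) = z * 1 by rw [mul_one]; exact hφ z z.2)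
  have hφ_graded : ∀ (g : G) (x : A), x ∈ 𝒜 g → φ x ∈ 𝒜 g := fun g x hx => by
    obtain rfl | hx0 := eq_or_ne x 0
    · simp
    · exact DirectSum.mem_of_mul_eq_mul 𝒜 ha0 hx hx0 (ha x)
  obtain ⟨n, hn⟩ := Finset.nonempty_iff_ne_empty.mpr
    (mt (DirectSum.support_decompose_eq_empty_iff 𝒜).mp ha0)
  have hcomp := DirectSum.coe_decompose_mul_apply_eq_mul 𝒜 (φ := (φ : A →+* A)) hφ_graded ha n
  refine ⟨⟨_, n, ?_, SetLike.coe_mem _, isNormal_of_mul_apply_eq φ.surjective hcomp, hcomp⟩,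
    hφ_graded⟩
  exact mt ZeroMemClass.coe_eq_zero.mp (DFinsupp.mem_support_iff.mp hn)

/-- Let `G` be a linearly ordered abelian group and `A` a `G`-graded
`k`-algebra which is a domain and a finitely generated module over its center. Then for
every `φ` in the ozone group of `A` there is a nonzero homogeneous normal element `a`
with `a·φ(x) = x·a` for all `x`; in particular every ozone automorphism of `A` is a
graded automorphism (it maps each homogeneous component into itself). -/
theorem stmt1 (k A : Type*) [Field k] [CharZero k] [Ring A] [Algebra k A] [IsDomain A]
    (G : Type*) [AddCommGroup G] [LinearOrder G] [IsOrderedAddMonoid G] [DecidableEq G]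
    (𝒜 : G → Submodule k A) [GradedAlgebra 𝒜]
    [Module.Finite (Subalgebra.center k A) A]
    (φ : A ≃ₐ[k] A) (hφ : φ ∈ ozoneGroup k A) :
    (∃ (a : A) (g : G), a ≠ 0 ∧ a ∈ 𝒜 g ∧ IsNormal a ∧ ∀ x : A, a * φ x = x * a) ∧
    (∀ (g : G) (x : A), x ∈ 𝒜 g → φ x ∈ 𝒜 g) :=
  stmt1_general k A G 𝒜 φ hφ
end
end

section
/- Let A be a ℤ-graded k-algebra which is a domain and a finitely generated module over its center Z. Then the ozone group Oz(A) is trivial if and only if every normal element of A is central. -/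
noncomputable section

/-!
If `a ≠ 0` is normal, then `a x = σ(x) a` defines an automorphism `σ` fixing the center, so a
trivial ozone group forces `a` to be central.

Conversely, let `σ` fix the center `Z`. Inverting the nonzero elements of `Z` turns `A` into
`D = Frac Z ⊗_Z A`, a finite-dimensional central division algebra over `Frac Z`, to which `σ`
extends. By Skolem–Noether there is `u ≠ 0` with `σ(x) u = u x`; clearing the denominator of `u`
gives such an element `c ≠ 0` of `A`. This `c` is normal, hence central, so `σ = id`.

Skolem–Noether is proved directly: for a basis `e` of `D`, the map `a ↦ (x ↦ ∑ⱼ aⱼ x eⱼ)` is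
injective by an independence argument, hence onto `End D` by counting dimensions; writing `σ` in
this form, multiplicativity of `σ` forces `aⱼ x = σ(x) aⱼ`.
-/

open Module TensorProduct

section Sandwich

variable {F D : Type*} [Field F] [Ring D] [Algebra F D]

theorem forall_sum_commutator_mul_mul_eq_zero {ι : Type*} {s : Finset ι} {a b : ι → D}
    (h : ∀ x, ∑ i ∈ s, a i * x * b i = 0) (y : D) :
    ∀ x, ∑ i ∈ s, (a i * y - y * a i) * x * b i = 0 := by
  intro x
  calc ∑ i ∈ s, (a i * y - y * a i) * x * b i
      = ∑ i ∈ s, a i * (y * x) * b i - y * ∑ i ∈ s, a i * x * b i := by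
        simp only [Finset.mul_sum, ← Finset.sum_sub_distrib, sub_mul, mul_assoc]
    _ = 0 := by rw [h, h, mul_zero, sub_zero]

variable (F) in
def sandwichSum {ι : Type*} [Fintype ι] (e : ι → D) : (ι → D) →ₗ[F] End F D where
  toFun a := ∑ j, LinearMap.mulRight F (e j) ∘ₗ LinearMap.mulLeft F (a j)
  map_add' a a' := by ext x; simp [add_mul, Finset.sum_add_distrib]
  map_smul' c a := by ext x; simp [Finset.smul_sum]

theorem sandwichSum_apply {ι : Type*} [Fintype ι] (e : ι → D) (a : ι → D) (x : D) :
    sandwichSum F e a x = ∑ j, a j * x * e j := by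
  simp [sandwichSum]

variable [IsDomain D] [FiniteDimensional F D] [Algebra.IsCentral F D]

theorem eq_zero_of_forall_sum_mul_mul_eq_zero {ι : Type*} {b : ι → D}
    (hb : LinearIndependent F b) (s : Finset ι) (a : ι → D)
    (h : ∀ x, ∑ i ∈ s, a i * x * b i = 0) : ∀ i ∈ s, a i = 0 := by
  classical
  induction s using Finset.strongInduction generalizing a with
  | _ s ih =>
  by_contra! ⟨i₀, hi₀, ha₀⟩
  -- rescale so that the coefficient at `i₀` becomes `1`
  obtain ⟨c, hc⟩ := (FiniteDimensional.isUnit F ha₀).exists_left_inv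
  have h' : ∀ x, ∑ i ∈ s, c * a i * x * b i = 0 := fun x => by
    simp_rw [mul_assoc c, ← Finset.mul_sum, h, mul_zero]
  have hcentral : ∀ i ∈ s.erase i₀, c * a i ∈ Subalgebra.center F D := by
    intro i hi
    refine Subalgebra.mem_center_iff.2 fun y => (sub_eq_zero.1 ?_).symm
    refine ih _ (Finset.erase_ssubset hi₀) (fun j => c * a j * y - y * (c * a j))
      (fun x => ?_) i hi
    rw [← forall_sum_commutator_mul_mul_eq_zero h' y x, ← Finset.add_sum_erase _ _ hi₀, hc]
    simp
  choose f hf using fun i hi => (Algebra.IsCentral.mem_center_iff F).1 (hcentral i hi)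
  let g : ι → F := fun i => if hi : i ∈ s.erase i₀ then f i hi else 1
  have hg : ∀ i ∈ s, algebraMap F D (g i) = c * a i := by
    intro i hi
    by_cases hi' : i ∈ s.erase i₀
    · simp only [g, dif_pos hi', ← hf]
    · obtain rfl : i = i₀ := by simpa [hi] using hi'
      simp [g, hc]
  have hsum : ∑ i ∈ s, g i • b i = 0 := by
    rw [← h' 1]
    exact Finset.sum_congr rfl fun i hi => by rw [Algebra.smul_def, hg i hi, mul_one]
  have := linearIndependent_iff'.1 hb s g hsum i₀ hi₀
  simp [g] at this

theorem sandwichSum_surjective {ι : Type*} [Fintype ι] (e : Basis ι F D) :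
    Function.Surjective (sandwichSum F e) := by
  refine (LinearMap.injective_iff_surjective_of_finrank_eq_finrank ?_).1 ?_
  · simp [finrank_pi_fintype, finrank_linearMap, finrank_eq_card_basis e]
  · refine (injective_iff_map_eq_zero _).2 fun a ha => funext fun j => ?_
    refine eq_zero_of_forall_sum_mul_mul_eq_zero e.linearIndependent Finset.univ a (fun x => ?_) j
      (Finset.mem_univ j)
    rw [← sandwichSum_apply (F := F), ha, LinearMap.zero_apply]

theorem AlgHom.exists_ne_zero_map_mul_eq_mul_of_field (σ : D →ₐ[F] D) :
    ∃ u : D, u ≠ 0 ∧ ∀ x, σ x * u = u * x := by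
  let e := finBasis F D
  obtain ⟨a, ha⟩ := sandwichSum_surjective e σ.toLinearMap
  have hσ : ∀ x, σ x = ∑ j, a j * x * e j := fun x => by
    rw [← sandwichSum_apply (F := F), ha, AlgHom.toLinearMap_apply]
  have hint : ∀ x j, a j * x = σ x * a j := by
    intro x j
    refine sub_eq_zero.1 <| eq_zero_of_forall_sum_mul_mul_eq_zero e.linearIndependent
      Finset.univ (fun j => a j * x - σ x * a j) (fun y => ?_) j (Finset.mem_univ j)
    calc ∑ j, (a j * x - σ x * a j) * y * e j
        = σ (x * y) - σ x * σ y := by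
          simp only [hσ, Finset.mul_sum, ← Finset.sum_sub_distrib, sub_mul, mul_assoc]
      _ = 0 := by rw [map_mul, sub_self]
  obtain ⟨j, hj⟩ : ∃ j, a j ≠ 0 := by
    by_contra! h
    simpa [h] using hσ 1
  exact ⟨a j, hj, fun x => (hint x j).symm⟩

end Sandwich

namespace FractionRing

variable {R A : Type*} [CommRing R] [Ring A] [Algebra R A]

local notation "K" => FractionRing R

theorem exists_smul_eq_one_tmul_s2 (d : K ⊗[R] A) :
    ∃ s ∈ nonZeroDivisors R, ∃ a : A, s • d = 1 ⊗ₜ a := by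
  obtain ⟨⟨a, s⟩, h⟩ := IsLocalizedModule.surj (nonZeroDivisors R) (TensorProduct.mk R K A 1) d
  exact ⟨s, s.2, a, h⟩

theorem eq_zero_of_smul_eq_zero {s : R} (hs : s ∈ nonZeroDivisors R) {d : K ⊗[R] A}
    (h : s • d = 0) : d = 0 :=
  IsLocalizedModule.smul_injective (TensorProduct.mk R K A 1) ⟨s, hs⟩
    (h.trans (smul_zero _).symm)

theorem one_tmul_mul (a b : A) : (1 : K) ⊗ₜ[R] (a * b) = (1 ⊗ₜ a) * (1 ⊗ₜ b) := by
  rw [Algebra.TensorProduct.tmul_mul_tmul, one_mul]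

variable [IsDomain R] [IsDomain A] [FaithfulSMul R A]

theorem one_tmul_injective_s2 : Function.Injective (TensorProduct.mk R K A 1) :=
  (IsLocalizedModule.injective_iff_isRegular (nonZeroDivisors R) _).2 fun c =>
    (IsRegular.of_ne_zero (nonZeroDivisors.coe_ne_zero c)).isSMulRegular

theorem one_tmul_eq_zero {a : A} (h : (1 : K) ⊗ₜ[R] a = 0) : a = 0 :=
  one_tmul_injective_s2 (h.trans (tmul_zero _ _).symm)

instance : IsDomain (K ⊗[R] A) := by
  have : Nontrivial (K ⊗[R] A) := ⟨⟨1, 0, fun h => one_ne_zero (one_tmul_eq_zero h)⟩⟩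
  have : NoZeroDivisors (K ⊗[R] A) := by
    refine ⟨fun {x y} hxy => ?_⟩
    obtain ⟨s, hs, a, ha⟩ := exists_smul_eq_one_tmul_s2 x
    obtain ⟨t, ht, b, hb⟩ := exists_smul_eq_one_tmul_s2 y
    have hab : (1 : K) ⊗ₜ[R] (a * b) = 0 := by
      rw [one_tmul_mul, ← ha, ← hb, smul_mul_smul_comm, hxy, smul_zero]
    rcases mul_eq_zero.1 (one_tmul_eq_zero hab) with rfl | rfl
    · exact Or.inl (eq_zero_of_smul_eq_zero hs (ha.trans (tmul_zero _ _)))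
    · exact Or.inr (eq_zero_of_smul_eq_zero ht (hb.trans (tmul_zero _ _)))
  exact NoZeroDivisors.to_isDomain _

instance [Algebra.IsCentral R A] : Algebra.IsCentral K (K ⊗[R] A) := by
  refine ⟨fun d hd => ?_⟩
  obtain ⟨s, hs, a, ha⟩ := exists_smul_eq_one_tmul_s2 d
  have ha_central : a ∈ Subalgebra.center R A := by
    refine Subalgebra.mem_center_iff.2 fun b => one_tmul_injective_s2 (R := R) ?_
    simp only [TensorProduct.mk_apply, one_tmul_mul, ← ha, smul_mul_assoc, mul_smul_comm,
      Subalgebra.mem_center_iff.1 hd]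
  obtain ⟨r, rfl⟩ := (Algebra.IsCentral.mem_center_iff R).1 ha_central
  have hs' : algebraMap R K s ≠ 0 := IsFractionRing.to_map_ne_zero_of_mem_nonZeroDivisors hs
  have h : algebraMap R K s • d = algebraMap R K r • (1 : K ⊗[R] A) := by
    rw [algebraMap_smul, algebraMap_smul, ha, Algebra.algebraMap_eq_smul_one, tmul_smul,
      Algebra.TensorProduct.one_def]
  refine Algebra.mem_bot.2 ⟨(algebraMap R K s)⁻¹ * algebraMap R K r, ?_⟩
  rw [Algebra.algebraMap_eq_smul_one, mul_smul, ← h, inv_smul_smul₀ hs']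

theorem _root_.AlgHom.exists_ne_zero_map_mul_eq_mul [Module.Finite R A] [Algebra.IsCentral R A]
    (σ : A →ₐ[R] A) : ∃ c : A, c ≠ 0 ∧ ∀ b, σ b * c = c * b := by
  obtain ⟨u, hu0, hu⟩ :=
    (Algebra.TensorProduct.map (AlgHom.id K K) σ).exists_ne_zero_map_mul_eq_mul_of_field
  obtain ⟨s, hs, c, hc⟩ := exists_smul_eq_one_tmul_s2 u
  refine ⟨c, fun hc0 => hu0 (eq_zero_of_smul_eq_zero hs (by rw [hc, hc0, tmul_zero])),
    fun b => one_tmul_injective_s2 (R := R) ?_⟩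
  have hb := hu (1 ⊗ₜ b)
  rw [Algebra.TensorProduct.map_tmul, AlgHom.id_apply] at hb
  simp only [TensorProduct.mk_apply, one_tmul_mul, ← hc, mul_smul_comm, smul_mul_assoc, hb]

end FractionRing

theorem isNormal_of_forall_mul_eq_mul {A : Type*} [Mul A] (σ : A ≃ A) {c : A}
    (h : ∀ b, σ b * c = c * b) : IsNormal c := by
  ext t
  constructor
  · rintro ⟨x, rfl⟩
    exact ⟨σ x, h x⟩
  · rintro ⟨x, rfl⟩
    exact ⟨σ.symm x, show c * σ.symm x = x * c by rw [← h, σ.apply_symm_apply]⟩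

section Ozone

variable {k A : Type*} [Field k] [Ring A] [Algebra k A]

instance : Algebra (Subalgebra.center k A) A where
  algebraMap := (Subalgebra.center k A).val.toRingHom
  commutes' z a := (Subalgebra.mem_center_iff.1 z.2 a).symm
  smul_def' _ _ := rfl

instance : FaithfulSMul (Subalgebra.center k A) A :=
  (faithfulSMul_iff_algebraMap_injective _ _).2 Subtype.val_injective

instance : Algebra.IsCentral (Subalgebra.center k A) A :=
  ⟨fun a ha => Algebra.mem_bot.2
    ⟨⟨a, Subalgebra.mem_center_iff.2 (Subalgebra.mem_center_iff.1 ha)⟩, rfl⟩⟩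

def ozoneGroup.toCenterAlgHom {σ : A ≃ₐ[k] A} (hσ : σ ∈ ozoneGroup k A) :
    A →ₐ[Subalgebra.center k A] A :=
  { (σ : A →+* A) with commutes' := fun z => hσ z z.2 }

theorem exists_algEquiv_map_mul_eq_mul [IsDomain A] {a : A} (ha : a ≠ 0) (hn : IsNormal a) :
    ∃ σ : A ≃ₐ[k] A, ∀ x, σ x * a = a * x := by
  have hR : ∀ x, ∃ y, y * a = a * x := fun x => (Set.ext_iff.1 hn (a * x)).1 ⟨x, rfl⟩
  have hL : ∀ y, ∃ x, a * x = y * a := fun y => (Set.ext_iff.1 hn (y * a)).2 ⟨y, rfl⟩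
  choose f hf using hR
  let σ : A →ₐ[k] A :=
    { toFun := f
      map_one' := mul_right_cancel₀ ha (by rw [hf, one_mul, mul_one])
      map_mul' := fun x y => mul_right_cancel₀ ha <| by
        rw [hf, mul_assoc (f x), hf, ← mul_assoc (f x), hf, mul_assoc]
      map_zero' := mul_right_cancel₀ ha (by rw [hf, zero_mul, mul_zero])
      map_add' := fun x y => mul_right_cancel₀ ha (by rw [hf, add_mul, hf, hf, mul_add])
      commutes' := fun r => mul_right_cancel₀ ha (by rw [hf, Algebra.commutes]) }
  have hinj : Function.Injective σ := fun x y hxy =>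
    mul_left_cancel₀ ha (by rw [← hf, ← hf]; exact congrArg (· * a) hxy)
  have hsurj : Function.Surjective σ := fun y => by
    obtain ⟨x, hx⟩ := hL y
    exact ⟨x, mul_right_cancel₀ ha ((hf x).trans hx)⟩
  exact ⟨AlgEquiv.ofBijective σ ⟨hinj, hsurj⟩, hf⟩

theorem mem_ozoneGroup_of_map_mul_eq_mul [IsDomain A] {σ : A ≃ₐ[k] A} {a : A} (ha : a ≠ 0)
    (h : ∀ x, σ x * a = a * x) : σ ∈ ozoneGroup k A := fun z hz =>
  mul_right_cancel₀ ha ((h z).trans (Subalgebra.mem_center_iff.1 hz a))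

end Ozone

theorem stmt2_general (k A : Type*) [Field k] [Ring A] [Algebra k A] [IsDomain A]
    [Module.Finite (Subalgebra.center k A) A] :
    ozoneGroup k A = ⊥ ↔ ∀ a : A, IsNormal a → a ∈ Subalgebra.center k A := by
  refine ⟨fun h a hn => ?_, fun h => eq_bot_iff.2 fun σ hσ => ?_⟩
  · obtain rfl | ha := eq_or_ne a 0
    · exact zero_mem _
    obtain ⟨σ, hσ⟩ := exists_algEquiv_map_mul_eq_mul (k := k) ha hn
    have hσ1 : σ = 1 := by
      simpa [h] using mem_ozoneGroup_of_map_mul_eq_mul ha hσ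
    exact Subalgebra.mem_center_iff.2 fun x => by simpa [hσ1] using hσ x
  · obtain ⟨c, hc0, hc⟩ := (ozoneGroup.toCenterAlgHom hσ).exists_ne_zero_map_mul_eq_mul
    have hcZ := h c (isNormal_of_forall_mul_eq_mul σ.toEquiv hc)
    refine Subgroup.mem_bot.2 (AlgEquiv.ext fun b => mul_right_cancel₀ hc0 ?_)
    exact (hc b).trans (Subalgebra.mem_center_iff.1 hcZ b).symm

/-- Let `A` be a `ℤ`-graded `k`-algebra which is a domain and a finitely
generated module over its center `Z`. Then the ozone group of `A` is trivial if and only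
if every normal element of `A` is central. -/
theorem stmt2 (k A : Type*) [Field k] [CharZero k] [Ring A] [Algebra k A] [IsDomain A]
    (𝒜 : ℤ → Submodule k A) [GradedAlgebra 𝒜]
    [Module.Finite (Subalgebra.center k A) A] :
    ozoneGroup k A = ⊥ ↔ ∀ a : A, IsNormal a → a ∈ Subalgebra.center k A :=
  stmt2_general k A
end
end

section
/- Suppose k is algebraically closed of characteristic 0. Let A be a ℤ-graded k-algebra which is a domain and a finitely generated module over its center Z, and suppose the ozone group Oz(A) is a finite abelian group. For each φ ∈ Oz(A), let [φ] denote the set consisting of 0 together with all normal elements f ∈ A whose conjugation automorphism η_f equals φ. Then each [φ] is a Z-submodule of A and the sum Σ_{φ ∈ Oz(A)} [φ] inside A is a direct sum of Z-modules. -/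
/-!
A finite abelian group `H` of automorphisms of `A` acts diagonalizably once `k` has enough roots
of unity: the character projections `v ↦ |H|⁻¹ Σ_h χ(h⁻¹) h(v)` sum to the identity, so `A` is
spanned by the eigenspaces `A_χ`, `χ : H →* kˣ`. If `f_σ ∈ [σ]` and `0 ≠ w ∈ A_χ`, then
`χ(σ) f_σ w = f_σ σ(w) = w f_σ`, so a relation `Σ f_σ = 0` gives `(Σ χ(σ) f_σ) w = 0`, hence
`Σ χ(σ) f_σ = 0` as `A` is a domain. The characters with `A_χ ≠ 0` form a monoid (again because
`A` is a domain) on which distinct `σ` evaluate differently, since the `A_χ` span `A`; Dedekind's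
independence of characters then forces every `f_σ = 0`.
-/

noncomputable section

theorem LinearIndependent.eq_zero_of_forall_sum_smul_eq_zero {k V ι X : Type*} [Field k]
    [AddCommGroup V] [Module k V] {f : ι → X → k}
    (hf : LinearIndependent k f) (s : Finset ι) {a : ι → V}
    (h : ∀ x, ∑ i ∈ s, f i x • a i = 0) : ∀ i ∈ s, a i = 0 := by
  intro i hi
  refine (Module.forall_dual_apply_eq_zero_iff k (a i)).1 fun ℓ => ?_
  refine linearIndependent_iff'.1 hf s (fun i => ℓ (a i)) (funext fun x => ?_) i hi
  simpa [Finset.sum_apply, mul_comm] using congr_arg ℓ (h x)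

theorem CommGroup.sum_monoidHom_apply_eq_ite {k G : Type*} [Field k] [CommGroup G] [Finite G]
    [HasEnoughRootsOfUnity k (Monoid.exponent G)] [Fintype (G →* kˣ)] [DecidableEq G] (g : G) :
    ∑ χ : G →* kˣ, (χ g : k) = if g = 1 then (Nat.card G : k) else 0 := by
  classical
  let ev : (G →* kˣ) →* k := (Units.coeHom k).comp (MonoidHom.eval g)
  have hev : ev = 1 ↔ g = 1 := by
    rw [← CommGroup.forall_apply_eq_apply_iff G (M := k) (g' := 1), MonoidHom.ext_iff]
    simp [ev, Units.val_eq_one]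
  rw [← CommGroup.card_monoidHom_of_hasEnoughRootsOfUnity G k, Nat.card_eq_fintype_card]
  simpa [hev, ev] using sum_hom_units ev

namespace Representation

variable {k G V : Type*} [Field k] [CommGroup G] [AddCommGroup V] [Module k V]

def charEigenspace (ρ : Representation k G V) (χ : G →* kˣ) : Submodule k V :=
  ⨅ g, Module.End.eigenspace (ρ g) (χ g)

variable {ρ : Representation k G V}

theorem mem_charEigenspace {χ : G →* kˣ} {v : V} :
    v ∈ ρ.charEigenspace χ ↔ ∀ g, ρ g v = (χ g : k) • v := by
  simp only [charEigenspace, Submodule.mem_iInf, Module.End.mem_eigenspace_iff]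

theorem sum_smul_apply_mem_charEigenspace [Fintype G] (χ : G →* kˣ) (v : V) :
    ∑ g, (χ g⁻¹ : k) • ρ g v ∈ ρ.charEigenspace χ := by
  refine mem_charEigenspace.2 fun h => ?_
  calc ρ h (∑ g, (χ g⁻¹ : k) • ρ g v) = ∑ g, (χ g⁻¹ : k) • ρ (h * g) v := by
        simp [map_sum, map_smul, map_mul]
    _ = ∑ g, (χ (h * g⁻¹) : k) • ρ g v :=
        Fintype.sum_equiv (Equiv.mulLeft h) _ _ fun g => by simp [mul_comm]
    _ = (χ h : k) • ∑ g, (χ g⁻¹ : k) • ρ g v := by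
        simp [Finset.smul_sum, smul_smul, map_mul]

variable [Finite G] [HasEnoughRootsOfUnity k (Monoid.exponent G)] [NeZero (Nat.card G : k)]

theorem iSup_charEigenspace_eq_top (ρ : Representation k G V) :
    ⨆ χ, ρ.charEigenspace χ = ⊤ := by
  classical
  have := Fintype.ofFinite G
  have := Fintype.ofFinite (G →* kˣ)
  refine eq_top_iff.2 fun v _ => ?_
  have hv : (Nat.card G : k)⁻¹ • ∑ χ : G →* kˣ, ∑ g, (χ g⁻¹ : k) • ρ g v = v := by
    rw [Finset.sum_comm]
    simp_rw [← Finset.sum_smul, CommGroup.sum_monoidHom_apply_eq_ite]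
    simp only [Finset.sum_ite_eq', inv_eq_one, ite_smul, zero_smul, Finset.mem_univ, if_true,
      map_one, Module.End.one_apply, smul_smul, inv_mul_cancel₀ (NeZero.ne (Nat.card G : k)),
      one_smul]
  rw [← hv, Finset.smul_sum]
  exact Submodule.sum_mem _ fun χ _ => Submodule.mem_iSup_of_mem χ <|
    Submodule.smul_mem _ _ (sum_smul_apply_mem_charEigenspace χ v)

theorem eq_of_forall_charEigenspace_ne_bot (hρ : Function.Injective ρ) {g g' : G}
    (h : ∀ χ, ρ.charEigenspace χ ≠ ⊥ → χ g = χ g') : g = g' := by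
  refine hρ (LinearMap.ext fun v => ?_)
  have hle : ⨆ χ, ρ.charEigenspace χ ≤ LinearMap.eqLocus (ρ g) (ρ g') := iSup_le fun χ => by
    by_cases hχ : ρ.charEigenspace χ = ⊥
    · simp [hχ]
    · intro w hw
      rw [mem_charEigenspace] at hw
      simp [LinearMap.mem_eqLocus, hw, h χ hχ]
  exact hle (ρ.iSup_charEigenspace_eq_top ▸ Submodule.mem_top)

end Representation

section ConjSubmodule

variable {k A : Type*} [Field k] [Ring A] [Algebra k A]

def conjSubmodule (σ : A ≃ₐ[k] A) : Submodule (Subalgebra.center k A) A where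
  carrier := {f | ∀ x, f * σ x = x * f}
  add_mem' {f g} hf hg x := by rw [add_mul, mul_add, hf x, hg x]
  zero_mem' x := by rw [zero_mul, mul_zero]
  smul_mem' z f hf x := by
    have hz : x * z = z * x := Subalgebra.mem_center_iff.1 z.2 x
    change (z : A) * f * σ x = x * (z * f)
    rw [mul_assoc, hf x, ← mul_assoc, ← hz, mul_assoc]

variable {σ : A ≃ₐ[k] A} {f : A}

theorem IsNormal.of_mem_conjSubmodule (hf : f ∈ conjSubmodule σ) : IsNormal f := by
  ext y
  constructor
  · rintro ⟨x, rfl⟩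
    exact ⟨σ.symm x, by simpa using (hf (σ.symm x)).symm⟩
  · rintro ⟨x, rfl⟩
    exact ⟨σ x, hf x⟩

theorem coe_conjSubmodule (σ : A ≃ₐ[k] A) : (conjSubmodule σ : Set A) =
    {0} ∪ {f : A | f ≠ 0 ∧ IsNormal f ∧ ∀ x : A, f * σ x = x * f} := by
  ext f
  by_cases hf0 : f = 0
  · simp [hf0, (conjSubmodule σ).zero_mem]
  · simpa [hf0] using ⟨fun hf => ⟨IsNormal.of_mem_conjSubmodule hf, hf⟩, And.right⟩

theorem smul_mul_eq_mul_of_mem_conjSubmodule (hf : f ∈ conjSubmodule σ) {c : k} {w : A}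
    (hw : σ w = c • w) : (c • f) * w = w * f := by
  rw [smul_mul_assoc, ← mul_smul_comm, ← hw, hf w]

end ConjSubmodule

section AutSubgroup

open scoped IsMulCommutative

variable {k A : Type*} [Field k] [Ring A] [Algebra k A] (H : Subgroup (A ≃ₐ[k] A))

def autRepresentation : Representation k H A :=
  (AlgEquiv.toLinearMapHom k A).comp H.subtype

theorem autRepresentation_apply (σ : H) (a : A) :
    autRepresentation H σ a = (σ : A ≃ₐ[k] A) a := rfl

theorem autRepresentation_injective : Function.Injective (autRepresentation H) :=
  fun _ _ h => Subtype.ext <| AlgEquiv.ext fun a => LinearMap.congr_fun h a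

variable [IsMulCommutative H]

theorem mul_mem_charEigenspace {χ₁ χ₂ : H →* kˣ} {w₁ w₂ : A}
    (h₁ : w₁ ∈ (autRepresentation H).charEigenspace χ₁)
    (h₂ : w₂ ∈ (autRepresentation H).charEigenspace χ₂) :
    w₁ * w₂ ∈ (autRepresentation H).charEigenspace (χ₁ * χ₂) := by
  rw [Representation.mem_charEigenspace] at *
  intro σ
  simp only [autRepresentation_apply] at *
  rw [map_mul, h₁, h₂, smul_mul_smul_comm, MonoidHom.mul_apply, Units.val_mul]

variable [IsDomain A]

def occurringChars : Submonoid (H →* kˣ) where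
  carrier := {χ | (autRepresentation H).charEigenspace χ ≠ ⊥}
  one_mem' := (Submodule.ne_bot_iff _).2 ⟨1,
    Representation.mem_charEigenspace.2 fun σ => by simp [autRepresentation_apply], one_ne_zero⟩
  mul_mem' {χ₁ χ₂} h₁ h₂ := by
    obtain ⟨w₁, hw₁, hw₁0⟩ := (Submodule.ne_bot_iff _).1 h₁
    obtain ⟨w₂, hw₂, hw₂0⟩ := (Submodule.ne_bot_iff _).1 h₂
    exact (Submodule.ne_bot_iff _).2
      ⟨w₁ * w₂, mul_mem_charEigenspace H hw₁ hw₂, mul_ne_zero hw₁0 hw₂0⟩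

variable [Finite H] [HasEnoughRootsOfUnity k (Monoid.exponent H)] [NeZero (Nat.card H : k)]

theorem iSupIndep_conjSubmodule : iSupIndep fun σ : H => conjSubmodule (σ : A ≃ₐ[k] A) := by
  refine (iSupIndep_iff_finsetSum_eq_zero_imp_eq_zero _).2 fun s g hg hsum => ?_
  have hrel : ∀ χ ∈ occurringChars H, ∑ σ ∈ s, (χ σ : k) • g σ = 0 := by
    intro χ hχ
    obtain ⟨w, hw, hw0⟩ := (Submodule.ne_bot_iff _).1 hχ
    rw [Representation.mem_charEigenspace] at hw
    have : (∑ σ ∈ s, (χ σ : k) • g σ) * w = 0 := by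
      rw [Finset.sum_mul, Finset.sum_congr rfl fun σ hσ =>
        smul_mul_eq_mul_of_mem_conjSubmodule (hg σ hσ) (hw σ), ← Finset.mul_sum, hsum, mul_zero]
    exact (mul_eq_zero.1 this).resolve_right hw0
  let ev : H → (occurringChars H →* k) := fun σ =>
    (Units.coeHom k).comp ((MonoidHom.eval σ).comp (occurringChars H).subtype)
  have hev : Function.Injective ev := fun σ τ h =>
    Representation.eq_of_forall_charEigenspace_ne_bot (autRepresentation_injective H)
      fun χ hχ => Units.ext (DFunLike.congr_fun h (⟨χ, hχ⟩ : occurringChars H))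
  exact ((linearIndependent_monoidHom _ k).comp ev hev).eq_zero_of_forall_sum_smul_eq_zero s
    fun χ => hrel χ χ.2

end AutSubgroup

theorem stmt15_general (k A : Type*) [Field k] [CharZero k] [IsAlgClosed k]
    [Ring A] [Algebra k A] [IsDomain A]
    [Finite ↥(ozoneGroup k A)]
    (habel : ∀ σ ∈ ozoneGroup k A, ∀ τ ∈ ozoneGroup k A, σ * τ = τ * σ) :
    ∃ M : ↥(ozoneGroup k A) → Submodule ↥(Subalgebra.center k A) A,
      (∀ φ : ↥(ozoneGroup k A),
        (M φ : Set A) =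
          {0} ∪ {f : A | f ≠ 0 ∧ IsNormal f ∧ ∀ x : A, f * (φ : A ≃ₐ[k] A) x = x * f}) ∧
      iSupIndep M := by
  have : IsMulCommutative (ozoneGroup k A) := ⟨⟨fun σ τ => Subtype.ext (habel _ σ.2 _ τ.2)⟩⟩
  have : NeZero (Monoid.exponent (ozoneGroup k A) : k) :=
    ⟨Nat.cast_ne_zero.2 Monoid.exponent_ne_zero_of_finite⟩
  exact ⟨fun φ => conjSubmodule (φ : A ≃ₐ[k] A), fun φ => coe_conjSubmodule _,
    iSupIndep_conjSubmodule _⟩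

/-- Suppose `k` is algebraically closed of characteristic 0. Let `A` be a
`ℤ`-graded `k`-algebra which is a domain and a finitely generated module over its center
`Z`, with finite abelian ozone group. For each `φ` in the ozone group, let `[φ]` be the
set consisting of `0` together with all normal elements `f` of `A` inducing `φ` by
conjugation (i.e. `f·φ(x) = x·f` for all `x`). Then each `[φ]` is a `Z`-submodule of `A`
and the sum `Σ_{φ} [φ]` inside `A` is a direct sum of `Z`-modules. -/
theorem stmt15 (k A : Type*) [Field k] [CharZero k] [IsAlgClosed k]
    [Ring A] [Algebra k A] [IsDomain A]
    (𝒜 : ℤ → Submodule k A) [GradedAlgebra 𝒜]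
    [Module.Finite (Subalgebra.center k A) A]
    [Finite ↥(ozoneGroup k A)]
    (habel : ∀ σ ∈ ozoneGroup k A, ∀ τ ∈ ozoneGroup k A, σ * τ = τ * σ) :
    ∃ M : ↥(ozoneGroup k A) → Submodule ↥(Subalgebra.center k A) A,
      (∀ φ : ↥(ozoneGroup k A),
        (M φ : Set A) =
          {0} ∪ {f : A | f ≠ 0 ∧ IsNormal f ∧ ∀ x : A, f * (φ : A ≃ₐ[k] A) x = x * f}) ∧
      iSupIndep M :=
  stmt15_general k A habel
end
end
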